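/- Kraft-type bound from an injective prefix-length encoding: let S be a countable set and ℓ : S → ℕ such that there is an injection from S into binary strings with s mapped to a string of length ℓ(s), the image being prefix-free. Then ∑' s, (2 : ℝ)^(-(ℓ s : ℤ)) ≤ 1. -/
import Mathlib

set_option maxHeartbeats 1000000 in
lemma kraft_card (w : List Bool) (n : ℕ) (h : w.length ≤ n) :
    Fintype.card {f : Fin n → Bool // w <+: List.ofFn f} = 2 ^ (n - w.length) := by
  have e : {f : Fin n → Bool // w <+: List.ofFn f} ≃ (Fin (n - w.length) → Bool) := by
    refine
      { toFun := fun f i => f.1 ⟨w.length + i, by omega⟩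
        invFun := fun g => ⟨fun i => if h' : (i : ℕ) < w.length then w[(i : ℕ)]
            else g ⟨(i : ℕ) - w.length, by omega⟩, ?_⟩
        left_inv := ?_, right_inv := ?_ }
    · refine ⟨List.ofFn (fun i : Fin (n - w.length) => g i), ?_⟩
      apply List.ext_getElem
      · simp; omega
      · intro i h1 h2
        rcases lt_or_ge i w.length with hi | hi
        · simp [List.getElem_append, hi, List.getElem_ofFn]
        · simp only [List.getElem_ofFn]
          rw [List.getElem_append_right (by simpa using hi)]
          simp [hi, Nat.not_lt.mpr hi]
    · rintro ⟨f, hf⟩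
      ext i
      simp only
      split_ifs with h'
      · have := hf.getElem h'
        simp only [List.getElem_ofFn] at this
        rw [← this]
      · congr 1
        ext
        simp
        omega
    · intro g
      ext i
      simp only
      rw [dif_neg (by omega)]
      congr 1
      ext
      simp
  rw [Fintype.card_congr e]
  simp

theorem kraft_finset {S : Type*} (ℓ : S → ℕ) (c : S → List Bool)
    (hlen : ∀ s, (c s).length = ℓ s)
    (hpf : ∀ s t : S, s ≠ t → ¬ (c s <+: c t)) (F : Finset S) :
    ∑ s ∈ F, (2 : ℝ) ^ (-(ℓ s : ℤ)) ≤ 1 := by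
  classical
  set n := F.sup ℓ with hn
  have hle : ∀ s ∈ F, ℓ s ≤ n := fun s hs => Finset.le_sup hs
  set E : S → Finset (Fin n → Bool) :=
    fun s => Finset.univ.filter (fun f => c s <+: List.ofFn f) with hE
  have hcard : ∀ s ∈ F, (E s).card = 2 ^ (n - ℓ s) := by
    intro s hs
    have := kraft_card (c s) n (by rw [hlen]; exact hle s hs)
    rw [Fintype.card_subtype] at this
    rw [hE]; rw [hlen] at this; exact this
  have hdisj : (F : Set S).PairwiseDisjoint E := by
    intro s hs t ht hst
    refine Finset.disjoint_left.mpr ?_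
    intro f hfs hft
    simp only [hE, Finset.mem_filter] at hfs hft
    rcases List.prefix_or_prefix_of_prefix hfs.2 hft.2 with h | h
    · exact hpf s t hst h
    · exact hpf t s (Ne.symm hst) h
  have hsum : ∑ s ∈ F, (E s).card ≤ 2 ^ n := by
    rw [← Finset.card_biUnion hdisj]
    calc (F.biUnion E).card ≤ Fintype.card (Fin n → Bool) := Finset.card_le_univ _
      _ = 2 ^ n := by simp
  have key : ∀ s ∈ F, (2 : ℝ) ^ (-(ℓ s : ℤ)) = (2 : ℝ) ^ (n - ℓ s) / 2 ^ n := by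
    intro s hs
    rw [eq_div_iff (by positivity), ← zpow_natCast (2 : ℝ) (n - ℓ s),
      ← zpow_natCast (2 : ℝ) n, ← zpow_add₀ (two_ne_zero)]
    congr 1
    have := hle s hs
    omega
  calc ∑ s ∈ F, (2 : ℝ) ^ (-(ℓ s : ℤ)) = ∑ s ∈ F, (2 : ℝ) ^ (n - ℓ s) / 2 ^ n :=
        Finset.sum_congr rfl key
    _ = (∑ s ∈ F, ((E s).card : ℝ)) / 2 ^ n := by
        rw [← Finset.sum_div]
        congr 1
        refine Finset.sum_congr rfl fun s hs => ?_
        rw [hcard s hs]; push_cast; ring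
    _ ≤ (2 : ℝ) ^ n / 2 ^ n := by
        gcongr
        exact_mod_cast hsum
    _ = 1 := by field_simp

/-- Kraft inequality from an injective prefix-free encoding with lengths ℓ. -/
theorem kraft_inequality (S : Type*) [Countable S] (ℓ : S → ℕ) (c : S → List Bool)
    (hinj : Function.Injective c) (hlen : ∀ s, (c s).length = ℓ s)
    (hpf : ∀ s t : S, s ≠ t → ¬ (c s <+: c t)) :
    ∑' s : S, (2 : ℝ) ^ (-(ℓ s : ℤ)) ≤ 1 :=
  tsum_le_of_sum_le' zero_le_one (kraft_finset ℓ c hlen hpf)
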